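/- arXiv:1301.4886 — 2 statements merged into one kernel-verified Lean document; each statement's English description precedes it below -/
import Mathlib

section
/- Let 0 < α < 1. For each n ∈ ℕ, the function g_{n+1}(x) = 1 + ∑_{k=2}^∞ (-1)^{k-1} α^{(k-1)(k-2-2n)/2} / ((1-α)⋯(1-α^{k-1})) · x^{(1-α^{k-1})/((1-α)α^{k-1})} converges absolutely for x ∈ [0,1], defines a continuous function on [0,1], and satisfies (V_α^* g_{n+1})(x) = (1-α)α^n g_{n+1}(x), where (V_α^* g)(x) = ∫_{x^{1/α}}^1 g(t)dt. -/
/-!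
Write `g_{n+1}(x) = ∑_{k ≥ 0} a_k x^{γ_k}` with `a_k = (-1)^k α^{k(k-1)/2} z^k / (α;α)_k`
at `z = α^{-n}` and `γ_k = (1 - α^k) / ((1 - α) α^k)`, so that `γ_0 = 0` and
`γ_{k+1} = (γ_k + 1) / α`. Integrating termwise from `x^{1/α}` to `1` turns `x^{γ_k}` into
`x^{γ_{k+1}}`, and `a_k / (γ_k + 1) = -(1 - α) α^n a_{k+1}`; so the integral is `(1 - α) α^n`
times the series shifted by one index, up to the constant `∑_k a_k`. That constant is Euler's
series `E(z) = (z;α)_∞`, which vanishes at `z = α^{-n}`: comparing terms gives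
`E(z) = (1 - z) E(αz)`, and `E(1) = 0`.
-/

open MeasureTheory Filter

section RpowSeries

lemma abs_mul_rpow_le_abs {c γ x : ℝ} (hγ : 0 ≤ γ) (hx : x ∈ Set.Icc (0 : ℝ) 1) :
    |c * x ^ γ| ≤ |c| := by
  rw [abs_mul, abs_of_nonneg (Real.rpow_nonneg hx.1 γ)]
  exact mul_le_of_le_one_right (abs_nonneg c) (Real.rpow_le_one hx.1 hx.2 hγ)

variable {a γ : ℕ → ℝ}

lemma summable_abs_mul_rpow (ha : Summable fun k => |a k|) (hγ : ∀ k, 0 ≤ γ k) {x : ℝ}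
    (hx : x ∈ Set.Icc (0 : ℝ) 1) : Summable fun k => |a k * x ^ γ k| :=
  ha.of_nonneg_of_le (fun _ => abs_nonneg _) fun k => abs_mul_rpow_le_abs (hγ k) hx

lemma continuousOn_tsum_mul_rpow (ha : Summable fun k => |a k|) (hγ : ∀ k, 0 ≤ γ k) :
    ContinuousOn (fun x => ∑' k, a k * x ^ γ k) (Set.Icc 0 1) :=
  continuousOn_tsum
    (fun k => (continuous_const.mul (Real.continuous_rpow_const (hγ k))).continuousOn)
    ha fun k _ hx => abs_mul_rpow_le_abs (hγ k) hx

lemma hasSum_intervalIntegral_tsum_mul_rpow (ha : Summable fun k => |a k|) (hγ : ∀ k, 0 ≤ γ k)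
    {y : ℝ} (hy0 : 0 ≤ y) (hy1 : y ≤ 1) :
    HasSum (fun k => a k * ((1 - y ^ (γ k + 1)) / (γ k + 1)))
      (∫ t in y..1, ∑' k, a k * t ^ γ k) := by
  have hIoc : ∀ t ∈ Set.uIoc y 1, t ∈ Set.Icc (0 : ℝ) 1 := fun t ht => by
    rw [Set.uIoc_of_le hy1] at ht
    exact ⟨hy0.trans ht.1.le, ht.2⟩
  have h := intervalIntegral.hasSum_integral_of_dominated_convergence (μ := volume)
    (F := fun k t => a k * t ^ γ k) (fun k _ => |a k|)
    (fun k => (continuous_const.mul (Real.continuous_rpow_const (hγ k))).aestronglyMeasurable)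
    (fun k => ae_of_all _ fun t ht => abs_mul_rpow_le_abs (hγ k) (hIoc t ht))
    (ae_of_all _ fun _ _ => ha) intervalIntegrable_const
    (ae_of_all _ fun t ht => (summable_abs_mul_rpow ha hγ (hIoc t ht)).of_abs.hasSum)
  refine h.congr_fun fun k => ?_
  rw [intervalIntegral.integral_const_mul, integral_rpow (Or.inl (by linarith [hγ k])),
    Real.one_rpow]

theorem intervalIntegral_tsum_mul_rpow_eq {α μ : ℝ} (hα : 0 ≤ α)
    (ha : Summable fun k => |a k|) (hγ : ∀ k, 0 ≤ γ k) (hγ0 : γ 0 = 0)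
    (hγ_succ : ∀ k, γ (k + 1) = (γ k + 1) / α)
    (ha_succ : ∀ k, a k / (γ k + 1) = -μ * a (k + 1)) (ha_sum : ∑' k, a k = 0) {x : ℝ}
    (hx : x ∈ Set.Icc (0 : ℝ) 1) :
    ∫ t in x ^ (1 / α)..1, ∑' k, a k * t ^ γ k = μ * ∑' k, a k * x ^ γ k := by
  have hI := hasSum_intervalIntegral_tsum_mul_rpow ha hγ (Real.rpow_nonneg hx.1 _)
    (Real.rpow_le_one hx.1 hx.2 (one_div_nonneg.2 hα))
  have hG : HasSum (fun k => a (k + 1) * x ^ γ (k + 1)) (∑' k, a k * x ^ γ k - a 0) := by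
    simpa [hγ0] using (hasSum_nat_add_iff' 1).2 (summable_abs_mul_rpow ha hγ hx).of_abs.hasSum
  have h1 : HasSum (fun k => a (k + 1)) (-a 0) := by
    simpa [ha_sum] using (hasSum_nat_add_iff' 1).2 ha.of_abs.hasSum
  have hμ := (hG.sub h1).mul_left μ
  rw [sub_neg_eq_add, sub_add_cancel] at hμ
  refine hI.unique (hμ.congr_fun fun k => ?_)
  rw [← Real.rpow_mul hx.1, one_div_mul_eq_div, ← hγ_succ, mul_div_assoc', mul_div_right_comm,
    ha_succ]
  ring

end RpowSeries

noncomputable def qPochhammer (α : ℝ) (k : ℕ) : ℝ := ∏ i ∈ Finset.Icc 1 k, (1 - α ^ i)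

noncomputable def eulerCoeff (α z : ℝ) (k : ℕ) : ℝ :=
  (-1) ^ k * α ^ k.choose 2 * z ^ k / qPochhammer α k

section Euler

variable {α : ℝ}

@[simp] lemma qPochhammer_zero (α : ℝ) : qPochhammer α 0 = 1 := rfl

lemma qPochhammer_succ (α : ℝ) (k : ℕ) :
    qPochhammer α (k + 1) = qPochhammer α k * (1 - α ^ (k + 1)) :=
  Finset.prod_Icc_succ_top (Nat.le_add_left 1 k) _

lemma one_sub_pow_pos (hα0 : 0 ≤ α) (hα1 : α < 1) {k : ℕ} (hk : k ≠ 0) : 0 < 1 - α ^ k :=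
  sub_pos.2 (pow_lt_one₀ hα0 hα1 hk)

@[simp] lemma eulerCoeff_zero (α z : ℝ) : eulerCoeff α z 0 = 1 := by simp [eulerCoeff]

lemma eulerCoeff_succ (α z : ℝ) (k : ℕ) :
    eulerCoeff α z (k + 1) = -(α ^ k * z) / (1 - α ^ (k + 1)) * eulerCoeff α z k := by
  simp only [eulerCoeff, qPochhammer_succ, Nat.choose_succ_succ', Nat.choose_one_right, pow_add,
    div_eq_mul_inv, mul_inv]
  ring

lemma eulerCoeff_succ_sub_eulerCoeff_mul (hα0 : 0 ≤ α) (hα1 : α < 1) (z : ℝ) (k : ℕ) :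
    eulerCoeff α z (k + 1) - eulerCoeff α (α * z) (k + 1) = -z * eulerCoeff α (α * z) k := by
  have h := (one_sub_pow_pos hα0 hα1 k.succ_ne_zero).ne'
  rw [eulerCoeff_succ, eulerCoeff_succ]
  simp only [eulerCoeff, mul_pow]
  field_simp
  ring

lemma summable_abs_eulerCoeff (hα0 : 0 ≤ α) (hα1 : α < 1) (z : ℝ) :
    Summable fun k => |eulerCoeff α z k| := by
  have hsmall : Tendsto (fun k : ℕ => α ^ k * |z|) atTop (nhds 0) := by
    simpa using (tendsto_pow_atTop_nhds_zero_of_lt_one hα0 hα1).mul_const |z|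
  refine summable_of_ratio_norm_eventually_le (r := 1 / 2) (by norm_num) ?_
  filter_upwards [hsmall.eventually_le_const (show 0 < (1 - α) / 2 by linarith)] with k hk
  have hD : 0 < 1 - α ^ (k + 1) := one_sub_pow_pos hα0 hα1 k.succ_ne_zero
  have hαk : α ^ (k + 1) ≤ α := pow_le_of_le_one hα0 hα1.le k.succ_ne_zero
  simp only [Real.norm_eq_abs, abs_abs, eulerCoeff_succ, abs_mul, abs_div, abs_neg,
    abs_of_nonneg (pow_nonneg hα0 k), abs_of_pos hD]
  refine mul_le_mul_of_nonneg_right ?_ (abs_nonneg _)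
  rw [div_le_iff₀ hD]
  linarith

lemma tsum_eulerCoeff_eq_one_sub_mul (hα0 : 0 ≤ α) (hα1 : α < 1) (z : ℝ) :
    ∑' k, eulerCoeff α z k = (1 - z) * ∑' k, eulerCoeff α (α * z) k := by
  have hs : ∀ w, Summable (eulerCoeff α w) := fun w =>
    (summable_abs_eulerCoeff hα0 hα1 w).of_abs
  have hdiff := ((hs z).sub (hs (α * z))).tsum_eq_zero_add
  simp only [eulerCoeff_succ_sub_eulerCoeff_mul hα0 hα1, eulerCoeff_zero, sub_self, zero_add,
    tsum_mul_left, (hs z).tsum_sub (hs (α * z))] at hdiff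
  linear_combination hdiff

lemma tsum_eulerCoeff_inv_pow (hα0 : 0 < α) (hα1 : α < 1) (n : ℕ) :
    ∑' k, eulerCoeff α (α ^ n)⁻¹ k = 0 := by
  induction n with
  | zero => simp [tsum_eulerCoeff_eq_one_sub_mul hα0.le hα1 1]
  | succ n ih =>
    rw [tsum_eulerCoeff_eq_one_sub_mul hα0.le hα1, pow_succ', mul_inv, ← mul_assoc,
      mul_inv_cancel₀ hα0.ne', one_mul, ih, mul_zero]

end Euler

noncomputable def qExponent (α : ℝ) (k : ℕ) : ℝ := (1 - α ^ k) / ((1 - α) * α ^ k)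

section Exponent

variable {α : ℝ}

@[simp] lemma qExponent_zero (α : ℝ) : qExponent α 0 = 0 := by simp [qExponent]

lemma qExponent_nonneg (hα0 : 0 ≤ α) (hα1 : α ≤ 1) (k : ℕ) : 0 ≤ qExponent α k :=
  div_nonneg (sub_nonneg.2 (pow_le_one₀ hα0 hα1))
    (mul_nonneg (sub_nonneg.2 hα1) (pow_nonneg hα0 k))

lemma qExponent_add_one (hα0 : α ≠ 0) (hα1 : α ≠ 1) (k : ℕ) :
    qExponent α k + 1 = (1 - α ^ (k + 1)) / ((1 - α) * α ^ k) := by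
  have := sub_ne_zero.2 hα1.symm
  simp only [qExponent]
  field_simp
  ring

lemma qExponent_succ (hα0 : α ≠ 0) (hα1 : α ≠ 1) (k : ℕ) :
    qExponent α (k + 1) = (qExponent α k + 1) / α := by
  rw [qExponent_add_one hα0 hα1, qExponent, pow_succ]
  field_simp

end Exponent

lemma eulerCoeff_div_qExponent_add_one {α : ℝ} (hα0 : 0 < α) (hα1 : α < 1) {z : ℝ}
    (hz : z ≠ 0) (k : ℕ) :
    eulerCoeff α z k / (qExponent α k + 1) = -((1 - α) * z⁻¹) * eulerCoeff α z (k + 1) := by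
  have h1 : 1 - α ≠ 0 := (sub_pos.2 hα1).ne'
  have h2 := (one_sub_pow_pos hα0.le hα1 k.succ_ne_zero).ne'
  have h3 := pow_ne_zero k hα0.ne'
  rw [qExponent_add_one hα0.ne' hα1.ne, eulerCoeff_succ]
  field_simp

lemma succ_mul_sub_two_mul_div_two (j n : ℕ) :
    ((j : ℤ) + 1) * ((j : ℤ) - 2 * n) / 2 = ((j + 1).choose 2 : ℕ) - (n * (j + 1) : ℕ) := by
  have h : ((j + 1).choose 2 : ℤ) * 2 = (j + 1) * j := by
    exact_mod_cast (by simpa using (Nat.add_one_mul_choose_eq j 1).symm)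
  rw [show ((j : ℤ) + 1) * ((j : ℤ) - 2 * n) =
      2 * (((j + 1).choose 2 : ℕ) - (n * (j + 1) : ℕ)) by push_cast; linear_combination -h,
    Int.mul_ediv_cancel_left _ two_ne_zero]

lemma eulerCoeff_inv_pow_succ {α : ℝ} (hα : α ≠ 0) (n j : ℕ) :
    eulerCoeff α (α ^ n)⁻¹ (j + 1) = (-1 : ℝ) ^ (j + 1) *
      α ^ ((((j : ℤ) + 1) * ((j : ℤ) - 2 * (n : ℤ))) / 2 : ℤ) /
        (∏ i ∈ Finset.Icc 1 (j + 1), (1 - α ^ i)) := by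
  rw [succ_mul_sub_two_mul_div_two, zpow_sub₀ hα, zpow_natCast, zpow_natCast, pow_mul,
    eulerCoeff, qPochhammer, inv_pow]
  ring

/-- For `0 < α < 1`, the series defining `g_{n+1}` converges absolutely on `[0,1]`, defines a
continuous function, and `g_{n+1}` is an eigenfunction of `(V_α^* g)(x) = ∫_{x^{1/α}}^1 g(t) dt`
with eigenvalue `(1-α)α^n`. -/
theorem stmt_9 (α : ℝ) (hα0 : 0 < α) (hα1 : α < 1) (n : ℕ)
    (term : ℕ → ℝ → ℝ)
    (hterm : ∀ j : ℕ, ∀ x : ℝ, term j x =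
      (-1 : ℝ) ^ (j + 1) * α ^ ((((j : ℤ) + 1) * ((j : ℤ) - 2 * (n : ℤ))) / 2 : ℤ) /
        (∏ i ∈ Finset.Icc 1 (j + 1), (1 - α ^ i)) *
        x ^ ((1 - α ^ (j + 1)) / ((1 - α) * α ^ (j + 1))))
    (g : ℝ → ℝ) (hg : ∀ x : ℝ, g x = 1 + ∑' j : ℕ, term j x) :
    (∀ x ∈ Set.Icc (0:ℝ) 1, Summable fun j : ℕ => |term j x|) ∧
    ContinuousOn g (Set.Icc (0:ℝ) 1) ∧
    ∀ x ∈ Set.Icc (0:ℝ) 1, (∫ t in (x ^ (1/α))..(1:ℝ), g t) = (1 - α) * α ^ n * g x := by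
  set a : ℕ → ℝ := eulerCoeff α (α ^ n)⁻¹
  have ha := summable_abs_eulerCoeff hα0.le hα1 (α ^ n)⁻¹
  have hγ := qExponent_nonneg hα0.le hα1.le
  have hterm' : ∀ j x, term j x = a (j + 1) * x ^ qExponent α (j + 1) := fun j x => by
    rw [hterm, ← eulerCoeff_inv_pow_succ hα0.ne']
    rfl
  have hgG : Set.EqOn g (fun x => ∑' k, a k * x ^ qExponent α k) (Set.Icc 0 1) := fun x hx => by
    simp [hg, hterm', (summable_abs_mul_rpow ha hγ hx).of_abs.tsum_eq_zero_add, a]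
  refine ⟨fun x hx => ?_, (continuousOn_tsum_mul_rpow ha hγ).congr hgG, fun x hx => ?_⟩
  · simpa only [hterm'] using (summable_nat_add_iff 1).2 (summable_abs_mul_rpow ha hγ hx)
  · have hy1 : x ^ (1 / α) ≤ 1 := Real.rpow_le_one hx.1 hx.2 (by positivity)
    have ha_succ : ∀ k, a k / (qExponent α k + 1) = -((1 - α) * α ^ n) * a (k + 1) :=
      fun k => by simpa only [inv_inv] using
        eulerCoeff_div_qExponent_add_one hα0 hα1 (inv_ne_zero (pow_ne_zero n hα0.ne')) k
    rw [intervalIntegral.integral_congr (hgG.mono (Set.uIcc_subset_Icc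
      ⟨Real.rpow_nonneg hx.1 _, hy1⟩ ⟨zero_le_one, le_rfl⟩)), hgG hx]
    exact intervalIntegral_tsum_mul_rpow_eq hα0.le ha hγ (qExponent_zero α)
      (qExponent_succ hα0.ne' hα1.ne) ha_succ (tsum_eulerCoeff_inv_pow hα0 hα1 n) hx
end

section
/- Let 0 < α < 1 and for n ≥ 0 let f_{n+1}(x) = x^{α/(1-α)}( (ln x)^n + ∑_{k=1}^n (n!/(n-k)!)·α^{k(k-1)/2}(1-α)^k/((1-α)⋯(1-α^k))·(ln x)^{n-k} ). Then f_{n+1} extends to a continuous function on [0,1] having exactly n+1 zeroes in [0,1]. -/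
/-!
With `y = log x` and `q = α` we have `f_{n+1}(x) = x ^ (α / (1 - α)) * Q_n(y)` for the monic
polynomial `Q_n = qPoly q n` of degree `n`. Comparing coefficients gives `Q_{n+1}' = (n + 1) Q_n` and
`Q_{n+1}(q y) = q^{n+1} Q_{n+1}(y) + (n + 1)(1 - q) q^n Q_n(y)`.

By induction, `Q_n` has zeroes `s_1 < ⋯ < s_n < 0` with `q s_j < s_{j+1}`, and its sign alternates
between them. Then `Q_{n+1}` is strictly monotone on each `[s_j, s_{j+1}]`, and at a zero of `Q_n`
the second identity reads `Q_{n+1}(q s_j) = q^{n+1} Q_{n+1}(s_j)`; since `s_j < q s_j`, the value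
`Q_{n+1}(s_j)` has the sign opposite to the slope there. So `Q_{n+1}` changes sign on each of
`(-∞, s_1)`, `(q s_j, s_{j+1})` and `(q s_n, 0)`, and monotonicity leaves room for no other zero.
The zeroes of `f_{n+1}` on `[0, 1]` are then `0` and the `exp s_j`.
-/

open Finset Filter Topology

noncomputable def qWeight (q : ℝ) (k : ℕ) : ℝ :=
  q ^ (k * (k - 1) / 2) * (1 - q) ^ k / ∏ i ∈ Icc 1 k, (1 - q ^ i)

noncomputable def qCoeff (q : ℝ) (n k : ℕ) : ℝ := n.descFactorial k * qWeight q k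

noncomputable def qPoly (q : ℝ) (n : ℕ) (y : ℝ) : ℝ :=
  ∑ k ∈ range (n + 1), qCoeff q n k * y ^ (n - k)

lemma qWeight_zero (q : ℝ) : qWeight q 0 = 1 := by simp [qWeight]

lemma qWeight_pos {q : ℝ} (hq0 : 0 < q) (hq1 : q < 1) (k : ℕ) : 0 < qWeight q k := by
  have hprod : 0 < ∏ i ∈ Icc 1 k, (1 - q ^ i) := prod_pos fun i hi =>
    sub_pos.2 (pow_lt_one₀ hq0.le hq1 (by simp only [mem_Icc] at hi; omega))
  exact div_pos (mul_pos (pow_pos hq0 _) (pow_pos (sub_pos.2 hq1) _)) hprod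

lemma qWeight_succ_mul {q : ℝ} {k : ℕ} (hk : q ^ (k + 1) ≠ 1) :
    qWeight q (k + 1) * (1 - q ^ (k + 1)) = qWeight q k * q ^ k * (1 - q) := by
  have hk' : 1 - q ^ (k + 1) ≠ 0 := sub_ne_zero.2 hk.symm
  rw [qWeight, qWeight, Nat.triangle_succ, prod_Icc_succ_top (by omega), div_mul_eq_mul_div,
    mul_div_mul_right _ _ hk']
  ring

lemma qCoeff_zero (q : ℝ) (n : ℕ) : qCoeff q n 0 = 1 := by simp [qCoeff, qWeight_zero]

lemma qCoeff_of_lt (q : ℝ) {n k : ℕ} (h : n < k) : qCoeff q n k = 0 := by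
  simp [qCoeff, Nat.descFactorial_of_lt h]

lemma qCoeff_pos {q : ℝ} (hq0 : 0 < q) (hq1 : q < 1) {n k : ℕ} (hk : k ≤ n) :
    0 < qCoeff q n k :=
  mul_pos (by exact_mod_cast Nat.descFactorial_pos.2 hk) (qWeight_pos hq0 hq1 k)

lemma natCast_sub_mul_qCoeff_succ (q : ℝ) (n k : ℕ) :
    ((n + 1 - k : ℕ) : ℝ) * qCoeff q (n + 1) k = (n + 1) * qCoeff q n k := by
  have h := (Nat.descFactorial_succ (n + 1) k).symm.trans (Nat.succ_descFactorial_succ n k)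
  rw [qCoeff, qCoeff, ← mul_assoc, ← mul_assoc]
  congr 1
  exact_mod_cast h

lemma qCoeff_succ_succ_mul {q : ℝ} (hq0 : 0 ≤ q) (hq1 : q < 1) {n i : ℕ} (hi : i ≤ n) :
    qCoeff q (n + 1) (i + 1) * (q ^ (n - i) - q ^ (n + 1)) =
      (n + 1) * (1 - q) * q ^ n * qCoeff q n i := by
  have hweight := qWeight_succ_mul (pow_lt_one₀ hq0 hq1 (Nat.succ_ne_zero i)).ne
  have hsub : q ^ (n - i) - q ^ (n + 1) = q ^ (n - i) * (1 - q ^ (i + 1)) := by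
    rw [mul_sub, mul_one, ← pow_add]
    congr 2
    omega
  have hn : q ^ n = q ^ (n - i) * q ^ i := by rw [← pow_add, Nat.sub_add_cancel hi]
  rw [hsub, hn, qCoeff, qCoeff, Nat.succ_descFactorial_succ]
  push_cast
  linear_combination ((n + 1 : ℝ) * n.descFactorial i * q ^ (n - i)) * hweight

lemma pow_add_sum_eq_qPoly (q : ℝ) (n : ℕ) (y : ℝ) :
    y ^ n + ∑ k ∈ Icc 1 n, ((n.factorial / (n - k).factorial : ℕ) : ℝ) *
      (q ^ (k * (k - 1) / 2) * (1 - q) ^ k / ∏ i ∈ Icc 1 k, (1 - q ^ i)) * y ^ (n - k) =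
    qPoly q n y := by
  rw [qPoly, sum_range_succ', qCoeff_zero, one_mul, Nat.sub_zero, add_comm, range_eq_Ico,
    sum_Ico_add' (fun k => qCoeff q n k * y ^ (n - k)), zero_add, Ico_add_one_right_eq_Icc]
  congr 1
  refine sum_congr rfl fun k hk => ?_
  rw [qCoeff, qWeight, ← Nat.descFactorial_eq_div (mem_Icc.1 hk).2]

lemma qPoly_zero (q y : ℝ) : qPoly q 0 y = 1 := by simp [qPoly, qCoeff_zero]

lemma qPoly_apply_zero_pos {q : ℝ} (hq0 : 0 < q) (hq1 : q < 1) (n : ℕ) : 0 < qPoly q n 0 := by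
  rw [qPoly, sum_eq_single_of_mem n (self_mem_range_succ n) fun k hk hkn => by
    rw [zero_pow (by simp only [mem_range] at hk; omega), mul_zero]]
  simpa using qCoeff_pos hq0 hq1 le_rfl

lemma hasDerivAt_qPoly_succ (q : ℝ) (n : ℕ) (y : ℝ) :
    HasDerivAt (qPoly q (n + 1)) ((n + 1) * qPoly q n y) y := by
  have h : HasDerivAt (qPoly q (n + 1)) _ y := HasDerivAt.fun_sum (u := range (n + 2)) fun k _ =>
    (hasDerivAt_pow (n + 1 - k) y).const_mul (qCoeff q (n + 1) k)
  refine h.congr_deriv ?_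
  calc ∑ k ∈ range (n + 2), qCoeff q (n + 1) k * ((n + 1 - k : ℕ) * y ^ (n + 1 - k - 1))
      = ∑ k ∈ range (n + 2), (n + 1) * (qCoeff q n k * y ^ (n - k)) := sum_congr rfl fun k _ => by
        rw [show n + 1 - k - 1 = n - k by omega]
        linear_combination y ^ (n - k) * natCast_sub_mul_qCoeff_succ q n k
    _ = (n + 1) * qPoly q n y := by
        rw [sum_range_succ, qCoeff_of_lt q (lt_add_one n), zero_mul, mul_zero, add_zero, qPoly,
          mul_sum]

lemma qPoly_succ_mul {q : ℝ} (hq0 : 0 ≤ q) (hq1 : q < 1) (n : ℕ) (y : ℝ) :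
    qPoly q (n + 1) (q * y) =
      q ^ (n + 1) * qPoly q (n + 1) y + (n + 1) * (1 - q) * q ^ n * qPoly q n y := by
  have hterm : ∀ i ∈ range (n + 1), qCoeff q (n + 1) (i + 1) * (q * y) ^ (n + 1 - (i + 1)) =
      q ^ (n + 1) * (qCoeff q (n + 1) (i + 1) * y ^ (n + 1 - (i + 1))) +
        (n + 1) * (1 - q) * q ^ n * (qCoeff q n i * y ^ (n - i)) := by
    intro i hi
    rw [Nat.add_sub_add_right, mul_pow]
    linear_combination y ^ (n - i) * qCoeff_succ_succ_mul hq0 hq1 (mem_range_succ_iff.1 hi)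
  simp only [qPoly]
  rw [sum_range_succ', sum_range_succ' _ (n + 1), sum_congr rfl hterm, sum_add_distrib,
    mul_add, mul_sum, mul_sum, qCoeff_zero, Nat.sub_zero, mul_pow]
  ring

lemma eventually_atBot_neg_one_pow_mul_sum_pos (a : ℕ → ℝ) (ha : 0 < a 0) (n : ℕ) :
    ∀ᶠ y in atBot, 0 < (-1) ^ n * ∑ k ∈ range (n + 1), a k * y ^ (n - k) := by
  let g : ℝ → ℝ := fun u => ∑ k ∈ range (n + 1), a k * u ^ k
  have hg : Tendsto (fun y => g y⁻¹) atBot (𝓝 (g 0)) :=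
    ((by fun_prop : Continuous g).tendsto 0).comp tendsto_inv_atBot_zero
  have hg0 : g 0 = a 0 := by simp [g, sum_range_succ']
  filter_upwards [hg.eventually (lt_mem_nhds (hg0 ▸ ha)), eventually_lt_atBot 0] with y hgy hy
  have hfactor : ∑ k ∈ range (n + 1), a k * y ^ (n - k) = y ^ n * g y⁻¹ := by
    rw [mul_sum]
    refine sum_congr rfl fun k hk => ?_
    rw [pow_sub₀ y hy.ne (mem_range_succ_iff.1 hk), inv_pow]
    ring
  rw [hfactor, ← mul_assoc, ← mul_pow, neg_one_mul]
  exact mul_pos (pow_pos (neg_pos.2 hy) n) hgy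

/-- The open gap `(s j, s (j + 1))` between consecutive roots, read with `s 0 = -∞` and
`s (n + 1) = +∞`. -/
def gapIoo (s : ℕ → ℝ) (n j : ℕ) : Set ℝ := {y | (j = 0 ∨ s j < y) ∧ (j = n ∨ y < s (j + 1))}

def gapIcc (s : ℕ → ℝ) (n j : ℕ) : Set ℝ := {y | (j = 0 ∨ s j ≤ y) ∧ (j = n ∨ y ≤ s (j + 1))}

lemma gapIoo_subset_gapIcc (s : ℕ → ℝ) (n j : ℕ) : gapIoo s n j ⊆ gapIcc s n j :=
  fun _ hy => ⟨hy.1.imp_right le_of_lt, hy.2.imp_right le_of_lt⟩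

lemma Ioo_subset_gapIoo {s : ℕ → ℝ} {n j : ℕ} {a b : ℝ} (ha : a ∈ gapIcc s n j)
    (hb : b ∈ gapIcc s n j) : Set.Ioo a b ⊆ gapIoo s n j :=
  fun _ hy => ⟨ha.1.imp_right (·.trans_lt hy.1), hb.2.imp_right (hy.2.trans_le ·)⟩

lemma exists_mem_gap (s : ℕ → ℝ) (n : ℕ) (y : ℝ) :
    ∃ j ≤ n, (j = 0 ∨ s j ≤ y) ∧ (j = n ∨ y < s (j + 1)) := by
  induction n with
  | zero => exact ⟨0, le_rfl, Or.inl rfl, Or.inl rfl⟩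
  | succ n ih =>
    obtain ⟨j, hjn, hl, hr⟩ := ih
    rcases hr with rfl | hr
    · by_cases hy : y < s (j + 1)
      · exact ⟨j, by omega, hl, Or.inr hy⟩
      · exact ⟨j + 1, le_rfl, Or.inr (not_lt.1 hy), Or.inl rfl⟩
    · exact ⟨j, by omega, hl, Or.inr hr⟩

lemma strictMonoOn_mul_gapIcc {c ε : ℝ} {P R : ℝ → ℝ} {s : ℕ → ℝ} {n j : ℕ} (hc : 0 < c)
    (hR : ∀ y, HasDerivAt R (c * P y) y) (hP : ∀ y ∈ gapIoo s n j, 0 < ε * P y) :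
    StrictMonoOn (fun y => ε * R y) (gapIcc s n j) := by
  intro a ha b hb hab
  have hmono : StrictMonoOn (fun y => ε * R y) (Set.Icc a b) := by
    refine strictMonoOn_of_deriv_pos (convex_Icc a b) ?_ fun y hy => ?_
    · exact (continuous_const.mul
        (continuous_iff_continuousAt.2 fun y => (hR y).continuousAt)).continuousOn
    · rw [interior_Icc] at hy
      rw [((hR y).const_mul ε).deriv, mul_left_comm]
      exact mul_pos hc (hP y (Ioo_subset_gapIoo ha hb hy))
  exact hmono (Set.left_mem_Icc.2 hab.le) (Set.right_mem_Icc.2 hab.le) hab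

structure AlternatingRoots (q : ℝ) (P : ℝ → ℝ) (n : ℕ) (s : ℕ → ℝ) : Prop where
  neg : ∀ j, 1 ≤ j → j ≤ n → s j < 0
  mul_lt : ∀ j, 1 ≤ j → j < n → q * s j < s (j + 1)
  isRoot : ∀ j, 1 ≤ j → j ≤ n → P (s j) = 0
  sign : ∀ j ≤ n, ∀ y ∈ gapIoo s n j, 0 < (-1) ^ (n + j) * P y

namespace AlternatingRoots

variable {q r c : ℝ} {P R : ℝ → ℝ} {n j : ℕ} {s : ℕ → ℝ}

lemma lt_mul_self (hs : AlternatingRoots q P n s) (hq1 : q < 1) (h1 : 1 ≤ j) (hj : j ≤ n) :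
    s j < q * s j := by
  nlinarith [hs.neg j h1 hj]

lemma lt_succ (hs : AlternatingRoots q P n s) (hq1 : q < 1) (h1 : 1 ≤ j) (hj : j < n) :
    s j < s (j + 1) :=
  (hs.lt_mul_self hq1 h1 hj.le).trans (hs.mul_lt j h1 hj)

lemma strictMonoOn (hs : AlternatingRoots q P n s) (hq1 : q < 1) :
    StrictMonoOn s (Set.Icc 1 n) :=
  strictMonoOn_of_lt_add_one Set.ordConnected_Icc fun _ _ hj hj1 =>
    hs.lt_succ hq1 hj.1 (Nat.lt_of_succ_le hj1.2)

lemma eq_zero_iff (hs : AlternatingRoots q P n s) (y : ℝ) :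
    P y = 0 ↔ ∃ j ∈ Set.Icc 1 n, s j = y := by
  refine ⟨fun hy => ?_, fun ⟨j, hj, hjy⟩ => hjy ▸ hs.isRoot j hj.1 hj.2⟩
  obtain ⟨j, hjn, hl, hr⟩ := exists_mem_gap s n y
  have hgap : y ∉ gapIoo s n j := fun hmem => by simpa [hy] using hs.sign j hjn y hmem
  have hj0 : j ≠ 0 := fun h => hgap ⟨Or.inl h, hr⟩
  exact ⟨j, ⟨Nat.one_le_iff_ne_zero.2 hj0, hjn⟩,
    (hl.resolve_left hj0).eq_of_not_lt fun h => hgap ⟨Or.inr h, hr⟩⟩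

lemma self_mem_gapIcc (hs : AlternatingRoots q P n s) (hq1 : q < 1) (h1 : 1 ≤ j) (hj : j ≤ n) :
    s j ∈ gapIcc s n j :=
  ⟨Or.inr le_rfl, hj.eq_or_lt.imp id fun h => (hs.lt_succ hq1 h1 h).le⟩

lemma mul_self_mem_gapIoo (hs : AlternatingRoots q P n s) (hq1 : q < 1) (h1 : 1 ≤ j)
    (hj : j ≤ n) : q * s j ∈ gapIoo s n j :=
  ⟨Or.inr (hs.lt_mul_self hq1 h1 hj), hj.eq_or_lt.imp id (hs.mul_lt j h1)⟩

lemma succ_mem_gapIcc (hs : AlternatingRoots q P n s) (hq1 : q < 1) (hj : j < n) :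
    s (j + 1) ∈ gapIcc s n j :=
  ⟨(Nat.eq_zero_or_pos j).imp id fun h => (hs.lt_succ hq1 h hj).le, Or.inr le_rfl⟩

lemma strictMonoOn_gapIcc (hs : AlternatingRoots q P n s) (hc : 0 < c)
    (hR : ∀ y, HasDerivAt R (c * P y) y) (hj : j ≤ n) :
    StrictMonoOn (fun y => (-1) ^ (n + j) * R y) (gapIcc s n j) :=
  strictMonoOn_mul_gapIcc hc hR (hs.sign j hj)

lemma neg_one_pow_mul_lt_zero_of_lt_root (hs : AlternatingRoots q P n s) (hc : 0 < c)
    (hR : ∀ y, HasDerivAt R (c * P y) y) (hj : j ≤ n) {y t : ℝ} (hy : y ∈ gapIcc s n j)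
    (ht : t ∈ gapIcc s n j) (hRt : R t = 0) (hyt : y < t) : (-1) ^ (n + j) * R y < 0 := by
  simpa [hRt] using hs.strictMonoOn_gapIcc hc hR hj hy ht hyt

lemma neg_one_pow_mul_pos_of_root_lt (hs : AlternatingRoots q P n s) (hc : 0 < c)
    (hR : ∀ y, HasDerivAt R (c * P y) y) (hj : j ≤ n) {y t : ℝ} (hy : y ∈ gapIcc s n j)
    (ht : t ∈ gapIcc s n j) (hRt : R t = 0) (hty : t < y) : 0 < (-1) ^ (n + j) * R y := by
  simpa [hRt] using hs.strictMonoOn_gapIcc hc hR hj ht hy hty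

/-- `(-1) ^ (n + j) * R` increases from `s j` to `q * s j`, where it is multiplied by `r < 1`. -/
lemma neg_one_pow_mul_apply_lt_zero (hs : AlternatingRoots q P n s) (hq1 : q < 1) (hr1 : r < 1)
    (hc : 0 < c) (hR : ∀ y, HasDerivAt R (c * P y) y)
    (hRq : ∀ y, P y = 0 → R (q * y) = r * R y) (h1 : 1 ≤ j) (hj : j ≤ n) :
    (-1) ^ (n + j) * R (s j) < 0 := by
  have h := hs.strictMonoOn_gapIcc hc hR hj (hs.self_mem_gapIcc hq1 h1 hj)
    (gapIoo_subset_gapIcc s n j (hs.mul_self_mem_gapIoo hq1 h1 hj)) (hs.lt_mul_self hq1 h1 hj)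
  dsimp only at h
  rw [hRq _ (hs.isRoot j h1 hj)] at h
  nlinarith

lemma exists_neg_mem_gapIoo (hs : AlternatingRoots q P n s) (hq1 : q < 1) (hr0 : 0 < r)
    (hr1 : r < 1) (hc : 0 < c) (hR : ∀ y, HasDerivAt R (c * P y) y)
    (hRq : ∀ y, P y = 0 → R (q * y) = r * R y)
    (htail : ∀ᶠ y in atBot, 0 < (-1) ^ (n + 1) * R y) (hj : j ≤ n) :
    ∃ a ∈ gapIoo s n j, (-1) ^ (n + j) * R a < 0 ∧ (j = 0 ∨ q * s j ≤ a) := by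
  rcases Nat.eq_zero_or_pos j with rfl | h1
  · obtain ⟨a, ha, has⟩ := (htail.and (eventually_lt_atBot (s 1))).exists
    refine ⟨a, ⟨Or.inl rfl, Or.inr has⟩, ?_, Or.inl rfl⟩
    rw [pow_succ] at ha
    rw [add_zero]
    linarith
  · refine ⟨q * s j, hs.mul_self_mem_gapIoo hq1 h1 hj, ?_, Or.inr le_rfl⟩
    rw [hRq _ (hs.isRoot j h1 hj), mul_left_comm]
    exact mul_neg_of_pos_of_neg hr0 (hs.neg_one_pow_mul_apply_lt_zero hq1 hr1 hc hR hRq h1 hj)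

lemma exists_pos_mem_gapIcc (hs : AlternatingRoots q P n s) (hq1 : q < 1) (hr1 : r < 1)
    (hc : 0 < c) (hR : ∀ y, HasDerivAt R (c * P y) y) (hRq : ∀ y, P y = 0 → R (q * y) = r * R y)
    (hR0 : 0 < R 0) (hj : j ≤ n) :
    ∃ b ∈ gapIcc s n j, 0 < (-1) ^ (n + j) * R b ∧ b ≤ 0 := by
  rcases hj.eq_or_lt with rfl | hjn
  · refine ⟨0, ⟨(Nat.eq_zero_or_pos j).imp id fun h => (hs.neg j h le_rfl).le, Or.inl rfl⟩, ?_,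
      le_rfl⟩
    rwa [Even.neg_one_pow ⟨j, rfl⟩, one_mul]
  · refine ⟨s (j + 1), hs.succ_mem_gapIcc hq1 hjn, ?_, (hs.neg (j + 1) (by omega) hjn).le⟩
    have h := hs.neg_one_pow_mul_apply_lt_zero hq1 hr1 hc hR hRq (Nat.le_add_left 1 j) hjn
    rw [← add_assoc, pow_succ] at h
    linarith

lemma exists_root_mem_gapIoo (hs : AlternatingRoots q P n s) (hq1 : q < 1) (hr0 : 0 < r)
    (hr1 : r < 1) (hc : 0 < c) (hR : ∀ y, HasDerivAt R (c * P y) y)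
    (hRq : ∀ y, P y = 0 → R (q * y) = r * R y) (hR0 : 0 < R 0)
    (htail : ∀ᶠ y in atBot, 0 < (-1) ^ (n + 1) * R y) (hj : j ≤ n) :
    ∃ t ∈ gapIoo s n j, R t = 0 ∧ (j = 0 ∨ q * s j < t) ∧ t < 0 := by
  obtain ⟨a, ha, hRa, hqa⟩ := hs.exists_neg_mem_gapIoo hq1 hr0 hr1 hc hR hRq htail hj
  obtain ⟨b, hb, hRb, hb0⟩ := hs.exists_pos_mem_gapIcc hq1 hr1 hc hR hRq hR0 hj
  have hab : a < b := ((hs.strictMonoOn_gapIcc hc hR hj).lt_iff_lt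
    (gapIoo_subset_gapIcc s n j ha) hb).1 (hRa.trans hRb)
  have hcont : Continuous fun y => (-1) ^ (n + j) * R y :=
    continuous_const.mul (continuous_iff_continuousAt.2 fun y => (hR y).continuousAt)
  obtain ⟨t, ⟨hat, htb⟩, ht⟩ := intermediate_value_Ioo hab.le hcont.continuousOn ⟨hRa, hRb⟩
  refine ⟨t, ⟨ha.1.imp_right (·.trans hat), hb.2.imp_right (htb.trans_le ·)⟩,
    (mul_eq_zero.1 ht).resolve_left (pow_ne_zero _ (by norm_num)),
    hqa.imp_right (·.trans_lt hat), htb.trans_le hb0⟩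

theorem exists_succ (hs : AlternatingRoots q P n s) (hq0 : 0 < q) (hq1 : q < 1) (hr0 : 0 < r)
    (hr1 : r < 1) (hc : 0 < c) (hR : ∀ y, HasDerivAt R (c * P y) y)
    (hRq : ∀ y, P y = 0 → R (q * y) = r * R y) (hR0 : 0 < R 0)
    (htail : ∀ᶠ y in atBot, 0 < (-1) ^ (n + 1) * R y) :
    ∃ t, AlternatingRoots q R (n + 1) t := by
  choose! t hgap hroot hqt hneg using fun j (hj : j ≤ n) =>
    hs.exists_root_mem_gapIoo hq1 hr0 hr1 hc hR hRq hR0 htail hj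
  have below : ∀ i ≤ n, ∀ y ∈ gapIcc s n i, y < t i → (-1) ^ (n + i) * R y < 0 :=
    fun i hi y hy => hs.neg_one_pow_mul_lt_zero_of_lt_root hc hR hi hy
      (gapIoo_subset_gapIcc s n i (hgap i hi)) (hroot i hi)
  have above : ∀ i ≤ n, ∀ y ∈ gapIcc s n i, t i < y → 0 < (-1) ^ (n + i) * R y :=
    fun i hi y hy => hs.neg_one_pow_mul_pos_of_root_lt hc hR hi hy
      (gapIoo_subset_gapIcc s n i (hgap i hi)) (hroot i hi)
  refine ⟨fun j => t (j - 1), ⟨fun j _ hj => hneg _ (by omega), fun j h1 hj => ?_,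
    fun j _ hj => hroot _ (by omega), fun j hj y hy => ?_⟩⟩
  · obtain ⟨i, rfl⟩ : ∃ i, j = i + 1 := ⟨j - 1, by omega⟩
    have h1 : t i < s (i + 1) := (hgap i (by omega)).2.resolve_left (by omega)
    have h2 : q * s (i + 1) < t (i + 1) := (hqt (i + 1) (by omega)).resolve_left (by omega)
    simp only [Nat.add_sub_cancel]
    nlinarith
  · obtain ⟨hl, hr⟩ := hy
    rcases j with _ | i
    · have hy0 : y < t 0 := by simpa using hr
      have h := below 0 (Nat.zero_le n) y
        ⟨Or.inl rfl, (hgap 0 (Nat.zero_le n)).2.imp_right fun h => (hy0.trans h).le⟩ hy0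
      rw [add_zero] at h
      rw [add_zero, pow_succ]
      linarith
    · simp only [Nat.add_sub_cancel] at hl hr
      have hl : t i < y := hl.resolve_left (Nat.succ_ne_zero i)
      have hi : i ≤ n := by omega
      by_cases hcase : i = n ∨ y ≤ s (i + 1)
      · rw [show n + 1 + (i + 1) = n + i + 2 by ring, pow_add]
        simpa using above i hi y ⟨(hgap i hi).1.imp_right fun h => (h.trans hl).le, hcase⟩ hl
      · rw [not_or, not_le] at hcase
        have hr : y < t (i + 1) := hr.resolve_left (by omega)
        have h := below (i + 1) (by omega) y
          ⟨Or.inr hcase.2.le, (hgap (i + 1) (by omega)).2.imp_right fun h => (hr.trans h).le⟩ hr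
        rw [show n + 1 + (i + 1) = n + (i + 1) + 1 by ring, pow_succ]
        linarith

lemma ncard_rpow_mul_comp_log_eq_zero (hs : AlternatingRoots q P n s) (hq1 : q < 1) {p : ℝ}
    (hp : p ≠ 0) :
    {x ∈ Set.Icc (0 : ℝ) 1 | x ^ p * P (Real.log x) = 0}.ncard = n + 1 := by
  have hset : {x ∈ Set.Icc (0 : ℝ) 1 | x ^ p * P (Real.log x) = 0} =
      ↑(insert 0 ((Icc 1 n).image (Real.exp ∘ s))) := by
    ext x
    simp only [Set.mem_sep_iff, coe_insert, coe_image, coe_Icc, Set.mem_insert_iff,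
      Set.mem_image, Function.comp_apply]
    constructor
    · rintro ⟨⟨hx0, -⟩, hx⟩
      rcases hx0.eq_or_lt with rfl | hx0
      · exact Or.inl rfl
      · have hP := (mul_eq_zero.1 hx).resolve_left (Real.rpow_pos_of_pos hx0 p).ne'
        obtain ⟨j, hj, hsj⟩ := (hs.eq_zero_iff _).1 hP
        exact Or.inr ⟨j, hj, by rw [hsj, Real.exp_log hx0]⟩
    · rintro (rfl | ⟨j, hj, rfl⟩)
      · exact ⟨Set.left_mem_Icc.2 zero_le_one, by rw [Real.zero_rpow hp, zero_mul]⟩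
      · refine ⟨⟨(Real.exp_pos _).le, Real.exp_le_one_iff.2 (hs.neg j hj.1 hj.2).le⟩, ?_⟩
        rw [Real.log_exp, hs.isRoot j hj.1 hj.2, mul_zero]
  have hinj : Set.InjOn (Real.exp ∘ s) ↑(Icc 1 n) := by
    rw [coe_Icc]
    exact Real.exp_injective.comp_injOn (hs.strictMonoOn hq1).injOn
  rw [hset, Set.ncard_coe_finset, card_insert_of_notMem, card_image_of_injOn hinj, Nat.card_Icc,
    Nat.add_sub_cancel]
  simp [(Real.exp_pos _).ne']

end AlternatingRoots

theorem qPoly_alternatingRoots {q : ℝ} (hq0 : 0 < q) (hq1 : q < 1) (n : ℕ) :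
    ∃ s, AlternatingRoots q (qPoly q n) n s := by
  induction n with
  | zero => exact ⟨0, ⟨fun j _ _ => by omega, fun j _ _ => by omega, fun j _ _ => by omega,
      fun j hj y _ => by simp [Nat.le_zero.1 hj, qPoly_zero]⟩⟩
  | succ n ih =>
    obtain ⟨s, hs⟩ := ih
    refine hs.exists_succ hq0 hq1 (pow_pos hq0 (n + 1)) (pow_lt_one₀ hq0.le hq1 n.succ_ne_zero)
      n.cast_add_one_pos (hasDerivAt_qPoly_succ q n) (fun y hy => ?_)
      (qPoly_apply_zero_pos hq0 hq1 _)
      (eventually_atBot_neg_one_pow_mul_sum_pos _ (by rw [qCoeff_zero]; exact one_pos) _)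
    rw [qPoly_succ_mul hq0.le hq1, hy, mul_zero, add_zero]

lemma tendsto_rpow_mul_log_pow_nhdsGT_zero {p : ℝ} (hp : 0 < p) (m : ℕ) :
    Tendsto (fun x => x ^ p * Real.log x ^ m) (𝓝[>] 0) (𝓝 0) := by
  -- `x ^ p * log x ^ m = x ^ a * (log x * x ^ a) ^ m`, a product of two convergent factors
  set a := p / (m + 1)
  have ha : 0 < a := by positivity
  have h1 : Tendsto (fun x : ℝ => x ^ a) (𝓝[>] 0) (𝓝 0) := by
    simpa [Real.zero_rpow ha.ne'] using
      (Real.continuousAt_rpow_const 0 a (Or.inr ha.le)).tendsto.mono_left nhdsWithin_le_nhds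
  have h2 := (tendsto_log_mul_rpow_nhdsGT_zero ha).pow m
  refine (zero_mul (0 ^ m : ℝ) ▸ h1.mul h2).congr' ?_
  filter_upwards [self_mem_nhdsWithin] with x hx
  rw [mul_pow, ← Real.rpow_mul_natCast hx.le, mul_left_comm, ← Real.rpow_add hx, mul_comm]
  congr 2
  linear_combination (div_mul_cancel₀ p (by positivity : (m + 1 : ℝ) ≠ 0))

lemma continuousOn_rpow_mul_log_pow {p : ℝ} (hp : 0 < p) (m : ℕ) :
    ContinuousOn (fun x => x ^ p * Real.log x ^ m) (Set.Ici 0) := by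
  intro x hx
  rcases (Set.mem_Ici.1 hx).eq_or_lt with rfl | hx0
  · have h : ContinuousWithinAt (fun x => x ^ p * Real.log x ^ m) (Set.Ioi 0) 0 := by
      rw [ContinuousWithinAt, Real.zero_rpow hp.ne', zero_mul]
      exact tendsto_rpow_mul_log_pow_nhdsGT_zero hp m
    rw [← Set.Ioi_insert]
    exact continuousWithinAt_insert_self.2 h
  · exact ((Real.continuousAt_rpow_const _ _ (Or.inl hx0.ne')).mul
      ((Real.continuousAt_log hx0.ne').pow m)).continuousWithinAt

/-- For `0 < α < 1`, the eigenfunction `f_{n+1}` extends to a continuous function on `[0,1]`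
with exactly `n+1` zeroes in `[0,1]`. -/
theorem stmt_18 (α : ℝ) (hα0 : 0 < α) (hα1 : α < 1) (n : ℕ)
    (f : ℝ → ℝ)
    (hf : ∀ x : ℝ, f x = x ^ (α / (1 - α)) *
      ((Real.log x) ^ n + ∑ k ∈ Finset.Icc 1 n,
        ((n.factorial / (n - k).factorial : ℕ) : ℝ) *
          (α ^ (k * (k - 1) / 2) * (1 - α) ^ k / ∏ i ∈ Finset.Icc 1 k, (1 - α ^ i)) *
          (Real.log x) ^ (n - k))) :
    ∃ F : ℝ → ℝ, ContinuousOn F (Set.Icc (0:ℝ) 1) ∧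
      (∀ x ∈ Set.Ioc (0:ℝ) 1, F x = f x) ∧
      {x ∈ Set.Icc (0:ℝ) 1 | F x = 0}.ncard = n + 1 := by
  have hp : 0 < α / (1 - α) := div_pos hα0 (sub_pos.2 hα1)
  have hfQ : ∀ x, f x = x ^ (α / (1 - α)) * qPoly α n (Real.log x) := fun x => by
    rw [hf, pow_add_sum_eq_qPoly]
  obtain ⟨s, hs⟩ := qPoly_alternatingRoots hα0 hα1 n
  refine ⟨f, ?_, fun _ _ => rfl, ?_⟩
  · have hsum : f = fun x => ∑ k ∈ range (n + 1),
        qCoeff α n k * (x ^ (α / (1 - α)) * Real.log x ^ (n - k)) := by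
      ext x
      rw [hfQ, qPoly, mul_sum]
      exact sum_congr rfl fun k _ => by ring
    rw [hsum]
    exact continuousOn_finsetSum _ fun k _ =>
      (continuousOn_const.mul (continuousOn_rpow_mul_log_pow hp _)).mono Set.Icc_subset_Ici_self
  · simp only [hfQ]
    exact hs.ncard_rpow_mul_comp_log_eq_zero hα1 hp.ne'
end
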